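/- Let X be a smooth extremal surface of degree q+1 in ℙ³(k). Then any collection of coplanar lines on X is concurrent: if distinct lines L₁, L₂, L₃ on X are all contained in a common plane of ℙ³(k), then there is a point lying on all three. In particular, X contains no triangle of lines. -/

import Mathlib

open Module

/-! Basic setup: `k` is an algebraically closed field of characteristic `p > 0`,
`q = p^e`.  We model ℙ³(k) via linear subspaces of `k⁴ = Fin 4 → k`:
points, lines and planes of ℙ³(k) are subspaces of dimension 1, 2 and 3
respectively.  A hypersurface cut out by a homogeneous form is recorded by its
affine cone in `k⁴`. -/

/-- The Frobenius form in 4 variables determined by a 4×4 matrix `A`: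
`∑ i j, A i j * x i ^ q * x j`, a homogeneous form of degree `q+1`. -/
def frobForm {k : Type*} [Field k] (q : ℕ) (A : Matrix (Fin 4) (Fin 4) k)
    (x : Fin 4 → k) : k :=
  ∑ i, ∑ j, A i j * x i ^ q * x j

/-- The affine cone in `k⁴` of the extremal surface in ℙ³(k) cut out by the
Frobenius form with matrix `A`; a point of ℙ³(k) lies on the surface iff its
homogeneous coordinate representatives lie in this set. -/
def extremalCone (k : Type*) [Field k] (q : ℕ) (A : Matrix (Fin 4) (Fin 4) k) :
    Set (Fin 4 → k) :=
  {x | frobForm q A x = 0}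

/-- A point of ℙ³(k): a 1-dimensional subspace of `k⁴`. -/
def IsPoint {k : Type*} [Field k] (c : Submodule k (Fin 4 → k)) : Prop :=
  finrank k c = 1

/-- A line of ℙ³(k): a 2-dimensional subspace of `k⁴`. -/
def IsLine {k : Type*} [Field k] (L : Submodule k (Fin 4 → k)) : Prop :=
  finrank k L = 2

/-- A plane of ℙ³(k): a 3-dimensional subspace of `k⁴`. -/
def IsPlane {k : Type*} [Field k] (H : Submodule k (Fin 4 → k)) : Prop :=
  finrank k H = 3

/-- `L` is a line lying on the surface with affine cone `X`. -/
def IsLineOn {k : Type*} [Field k] (X : Set (Fin 4 → k))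
    (L : Submodule k (Fin 4 → k)) : Prop :=
  IsLine L ∧ (L : Set (Fin 4 → k)) ⊆ X

/-- Two lines of ℙ³(k) meet iff the corresponding subspaces of `k⁴` intersect
nontrivially. -/
def MeetsLine {k : Type*} [Field k] (L M : Submodule k (Fin 4 → k)) : Prop :=
  L ⊓ M ≠ ⊥

/-- Two lines of ℙ³(k) are skew iff the corresponding subspaces of `k⁴`
intersect trivially. -/
def SkewLine {k : Type*} [Field k] (L M : Submodule k (Fin 4 → k)) : Prop :=
  L ⊓ M = ⊥

/-- `IsStarAt q X S c`: `S` is a star on the surface with affine cone `X`,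
centered at the point `c`, i.e. a set of `q+1` distinct lines on the surface
all passing through `c`. -/
def IsStarAt {k : Type*} [Field k] (q : ℕ) (X : Set (Fin 4 → k))
    (S : Set (Submodule k (Fin 4 → k))) (c : Submodule k (Fin 4 → k)) : Prop :=
  IsPoint c ∧ S.ncard = q + 1 ∧ ∀ L ∈ S, IsLineOn X L ∧ c ≤ L

/-- `S` is a star on the surface with affine cone `X`. -/
def IsStar {k : Type*} [Field k] (q : ℕ) (X : Set (Fin 4 → k))
    (S : Set (Submodule k (Fin 4 → k))) : Prop :=
  ∃ c, IsStarAt q X S c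

/-- `c` is a star point of the surface with affine cone `X`. -/
def IsStarPoint {k : Type*} [Field k] (q : ℕ) (X : Set (Fin 4 → k))
    (c : Submodule k (Fin 4 → k)) : Prop :=
  ∃ S, IsStarAt q X S c

/-- `H` is a star plane of the surface with affine cone `X`, centered at `c`:
the plane section `X ∩ H` is the union of a star centered at `c`. -/
def IsStarPlaneAt {k : Type*} [Field k] (q : ℕ) (X : Set (Fin 4 → k))
    (H c : Submodule k (Fin 4 → k)) : Prop :=
  IsPlane H ∧ ∃ S, IsStarAt q X S c ∧
    X ∩ (H : Set (Fin 4 → k)) = ⋃ L ∈ S, (L : Set (Fin 4 → k))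

/-- An element of `Aut(X)`: since every projective linear automorphism of
ℙ³(k) is represented by an invertible linear map of `k⁴` (uniquely up to
scalars, which act trivially on subspaces and preserve every cone), `g ∈
PGL(4,k)` with `g(X) = X` corresponds to a linear automorphism of `k⁴`
mapping the affine cone `X` onto itself. -/
def PreservesCone {k : Type*} [Field k] (X : Set (Fin 4 → k))
    (g : (Fin 4 → k) ≃ₗ[k] (Fin 4 → k)) : Prop :=
  (⇑g) '' X = X

/-!
The Frobenius form is the diagonal of the pairing `B(w, z) = (w ^ q)ᵀ A z`, linear in `z` and
`q`-semilinear in `w`. The right orthogonal `W^⊥` of a subspace `W` has dimension `4 - dim W`: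
`A` is invertible, and over a perfect field the `q`-th powers of a basis of `W` stay independent.
A line `L` on `X` is totally isotropic by polarization (`q ≠ 1`, `k` infinite), so `L ≤ L^⊥`,
and `L = L^⊥` by dimension. If `L` lies in the plane `H`, then the point `H^⊥` lies in
`L^⊥ = L`, so all lines of `X` in `H` pass through `H^⊥`.
-/

open Submodule

section FrobeniusOrthogonal

variable {k ι : Type*} [Field k]

theorem exists_pow_ne_self [Infinite k] {q : ℕ} (hq : q ≠ 1) : ∃ t : k, t ^ q ≠ t := by
  by_contra! h
  have hX : (Polynomial.X ^ q : Polynomial k) = Polynomial.X := Polynomial.funext (by simp [h])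
  exact hq (by simpa using congrArg Polynomial.natDegree hX)

theorem eq_zero_of_forall_mul_add_pow_mul_eq_zero [Infinite k] {q : ℕ} (hq : q ≠ 1) {a b : k}
    (h : ∀ t : k, t * a + t ^ q * b = 0) : a = 0 := by
  obtain ⟨t, ht⟩ := exists_pow_ne_self (k := k) hq
  have : (t - t ^ q) * a = 0 := by linear_combination h t - t ^ q * h 1
  exact (mul_eq_zero.mp this).resolve_left (sub_ne_zero.mpr ht.symm)

theorem Pi.add_pow_expChar_pow {p e : ℕ} [ExpChar k p] (x y : ι → k) :
    (x + y) ^ p ^ e = x ^ p ^ e + y ^ p ^ e :=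
  funext fun i => _root_.add_pow_expChar_pow (x i) (y i) p e

def frobTwist (q : ℕ) (W : Submodule k (ι → k)) : Submodule k (ι → k) :=
  span k ((· ^ q) '' W)

theorem frobTwist_span_range {p e : ℕ} [ExpChar k p] {β : Type*} (v : β → ι → k) :
    frobTwist (p ^ e) (span k (Set.range v)) = span k (Set.range fun i => v i ^ p ^ e) := by
  refine le_antisymm (span_le.mpr ?_) (span_mono ?_)
  · rintro _ ⟨w, hw, rfl⟩
    induction hw using span_induction with
    | mem x hx =>
      obtain ⟨i, rfl⟩ := hx
      exact subset_span ⟨i, rfl⟩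
    | zero => simp [zero_pow (expChar_pow_pos k p e).ne']
    | add x y _ _ hx hy => simpa [Pi.add_pow_expChar_pow] using add_mem hx hy
    | smul a x _ hx => simpa [smul_pow] using smul_mem _ (a ^ p ^ e) hx
  · rintro _ ⟨i, rfl⟩
    exact ⟨v i, subset_span ⟨i, rfl⟩, rfl⟩

theorem LinearIndependent.pow_expChar_pow {p e : ℕ} [ExpChar k p] [PerfectRing k p] {β : Type*}
    {v : β → ι → k} (hv : LinearIndependent k v) :
    LinearIndependent k fun i => v i ^ p ^ e :=
  hv.map_of_surjective_injectiveₛ (iterateFrobenius k p e)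
    ((iterateFrobenius k p e).toAddMonoidHom.compLeft ι)
    (bijective_iterateFrobenius k p e).surjective
    (iterateFrobenius_inj k p e).comp_left
    fun a x => funext fun i => by simp [iterateFrobenius_def, mul_pow]

theorem finrank_frobTwist [Fintype ι] {p e : ℕ} [ExpChar k p] [PerfectRing k p]
    (W : Submodule k (ι → k)) : finrank k (frobTwist (p ^ e) W) = finrank k W := by
  let b := Module.finBasis k W
  have hspan : span k (Set.range (W.subtype ∘ b)) = W := by
    rw [Set.range_comp, span_image, b.span_eq, map_subtype_top]
  have hind : LinearIndependent k (W.subtype ∘ b) := b.linearIndependent.map' _ W.ker_subtype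
  conv_lhs => rw [← hspan, frobTwist_span_range]
  rw [finrank_span_eq_card hind.pow_expChar_pow, Fintype.card_fin]

variable [Fintype ι] [DecidableEq ι]

/-- Right orthogonal for the pairing `B(w, z) = (w ^ q)ᵀ A z`, whose diagonal is the
Frobenius form. -/
def frobOrthogonal (q : ℕ) (A : Matrix ι ι k) (W : Submodule k (ι → k)) : Submodule k (ι → k) :=
  A.toBilin'.orthogonal (frobTwist q W)

theorem mem_frobOrthogonal_iff {q : ℕ} {A : Matrix ι ι k} {W : Submodule k (ι → k)}
    {z : ι → k} : z ∈ frobOrthogonal q A W ↔ ∀ w ∈ W, A.toBilin' (w ^ q) z = 0 := by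
  change (∀ y ∈ frobTwist q W, A.toBilin' y z = 0) ↔ _
  refine ⟨fun h w hw => h _ (subset_span ⟨w, hw, rfl⟩), fun h y hy => ?_⟩
  refine (span_le (p := LinearMap.ker (A.toBilin'.flip z))).mpr ?_ hy
  rintro _ ⟨w, hw, rfl⟩
  exact h w hw

theorem frobOrthogonal_antitone {q : ℕ} {A : Matrix ι ι k} {W W' : Submodule k (ι → k)}
    (h : W ≤ W') : frobOrthogonal q A W' ≤ frobOrthogonal q A W := fun _ hz =>
  mem_frobOrthogonal_iff.mpr fun w hw => mem_frobOrthogonal_iff.mp hz w (h hw)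

theorem finrank_frobOrthogonal {p e : ℕ} [ExpChar k p] [PerfectRing k p] {A : Matrix ι ι k}
    (hA : IsUnit A) (W : Submodule k (ι → k)) :
    finrank k (frobOrthogonal (p ^ e) A W) = Fintype.card ι - finrank k W := by
  have hB := LinearMap.BilinForm.nondegenerate_toBilin'_of_det_ne_zero' A
    (A.isUnit_iff_isUnit_det.mp hA).ne_zero
  rw [frobOrthogonal, LinearMap.BilinForm.finrank_orthogonal hB, finrank_frobTwist,
    Module.finrank_fintype_fun_eq_card]

/-- Polarization along `w + t • z` leaves `t B(w, z) + tᵠ B(z, w) = 0` for all `t`. -/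
theorem le_frobOrthogonal_self {p e : ℕ} [ExpChar k p] [Infinite k] (hq : p ^ e ≠ 1)
    {A : Matrix ι ι k} {W : Submodule k (ι → k)}
    (hW : ∀ x ∈ W, A.toBilin' (x ^ p ^ e) x = 0) : W ≤ frobOrthogonal (p ^ e) A W := by
  intro z hz
  refine mem_frobOrthogonal_iff.mpr fun w hw => ?_
  refine eq_zero_of_forall_mul_add_pow_mul_eq_zero (b := A.toBilin' (z ^ p ^ e) w) hq fun t => ?_
  have h := hW (w + t • z) (add_mem hw (smul_mem _ t hz))
  simp only [Pi.add_pow_expChar_pow, smul_pow, map_add, map_smul, LinearMap.add_apply,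
    LinearMap.smul_apply, smul_eq_mul, hW w hw, hW z hz] at h
  linear_combination h

theorem frobOrthogonal_eq_self {p e : ℕ} [ExpChar k p] [PerfectRing k p] [Infinite k]
    (hq : p ^ e ≠ 1) {A : Matrix ι ι k} (hA : IsUnit A) {W : Submodule k (ι → k)}
    (hW : ∀ x ∈ W, A.toBilin' (x ^ p ^ e) x = 0) (hdim : 2 * finrank k W = Fintype.card ι) :
    frobOrthogonal (p ^ e) A W = W :=
  (eq_of_le_of_finrank_le (le_frobOrthogonal_self hq hW)
    (by rw [finrank_frobOrthogonal hA]; omega)).symm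

end FrobeniusOrthogonal

theorem mem_extremalCone_iff {k : Type*} [Field k] {q : ℕ} {A : Matrix (Fin 4) (Fin 4) k}
    {x : Fin 4 → k} : x ∈ extremalCone k q A ↔ A.toBilin' (x ^ q) x = 0 := by
  simp only [extremalCone, frobForm, Set.mem_ofPred_eq, Matrix.toBilin'_apply, Pi.pow_apply,
    mul_comm (A _ _)]

theorem coplanar_lines_concurrent_general {k : Type*} [Field k] [IsAlgClosed k]
    (p e q : ℕ) (hp : p.Prime) (hchar : CharP k p) (he : 1 ≤ e) (hq : q = p ^ e)
    (A : Matrix (Fin 4) (Fin 4) k) (hA : IsUnit A)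
    (L₁ L₂ L₃ : Submodule k (Fin 4 → k))
    (h₁ : IsLineOn (extremalCone k q A) L₁)
    (h₂ : IsLineOn (extremalCone k q A) L₂)
    (h₃ : IsLineOn (extremalCone k q A) L₃)
    (H : Submodule k (Fin 4 → k)) (hH : IsPlane H)
    (hL₁H : L₁ ≤ H) (hL₂H : L₂ ≤ H) (hL₃H : L₃ ≤ H) :
    ∃ c : Submodule k (Fin 4 → k), IsPoint c ∧ c ≤ L₁ ∧ c ≤ L₂ ∧ c ≤ L₃ := by
  have := Fact.mk hp
  subst hq
  have hq : p ^ e ≠ 1 := (Nat.one_lt_pow (by omega) hp.one_lt).ne'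
  have hmeet (L : Submodule k (Fin 4 → k)) (hL : IsLineOn (extremalCone k (p ^ e) A) L)
      (hLH : L ≤ H) : frobOrthogonal (p ^ e) A H ≤ L :=
    calc frobOrthogonal (p ^ e) A H
      _ ≤ frobOrthogonal (p ^ e) A L := frobOrthogonal_antitone hLH
      _ = L := frobOrthogonal_eq_self hq hA (fun x hx => mem_extremalCone_iff.mp (hL.2 hx))
        (by rw [hL.1]; rfl)
  refine ⟨frobOrthogonal (p ^ e) A H, ?_, hmeet L₁ h₁ hL₁H, hmeet L₂ h₂ hL₂H, hmeet L₃ h₃ hL₃H⟩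
  rw [IsPoint, finrank_frobOrthogonal hA, hH, Fintype.card_fin]

/-- On a smooth extremal surface `X` of degree `q+1` in
ℙ³(k), any collection of coplanar lines is concurrent: if distinct lines
`L₁, L₂, L₃` on `X` are all contained in a common plane of ℙ³(k), then there
is a point lying on all three.  In particular, `X` contains no triangle of
lines. -/
theorem coplanar_lines_concurrent {k : Type*} [Field k] [IsAlgClosed k]
    (p e q : ℕ) (hp : p.Prime) (hchar : CharP k p) (he : 1 ≤ e) (hq : q = p ^ e)
    (A : Matrix (Fin 4) (Fin 4) k) (hA : IsUnit A)
    (L₁ L₂ L₃ : Submodule k (Fin 4 → k))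
    (h₁ : IsLineOn (extremalCone k q A) L₁)
    (h₂ : IsLineOn (extremalCone k q A) L₂)
    (h₃ : IsLineOn (extremalCone k q A) L₃)
    (h12 : L₁ ≠ L₂) (h13 : L₁ ≠ L₃) (h23 : L₂ ≠ L₃)
    (H : Submodule k (Fin 4 → k)) (hH : IsPlane H)
    (hL₁H : L₁ ≤ H) (hL₂H : L₂ ≤ H) (hL₃H : L₃ ≤ H) :
    ∃ c : Submodule k (Fin 4 → k), IsPoint c ∧ c ≤ L₁ ∧ c ≤ L₂ ∧ c ≤ L₃ :=
  coplanar_lines_concurrent_general p e q hp hchar he hq A hA L₁ L₂ L₃ h₁ h₂ h₃ H hH hL₁H hL₂H hL₃H
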